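/- arXiv:1204.2127 — 2 statements merged into one kernel-verified Lean document; each statement's English description precedes it below -/
import Mathlib

section
/- Let λ : Γ(A) → O(n) be the group homomorphism sending an affine isometry (M, b) to its linear part M. Then the image of λ is the subgroup of diagonal orthogonal matrices generated by D_1, …, D_{n−1}, it is an elementary abelian 2-group (every non-identity element has order 2), and its cardinality equals 2^r, where r is the rank of A viewed as a matrix over 𝔽₂. (This image is the holonomy group ℤ₂^r of the real Bott manifold M(A).) -/
/-!
The linear part of `s_i` is `D_i` for every `i`, including `i = n`: the last row of a Bott
matrix vanishes, so `D_n = I`. The map `v ↦ diag((-1)^{v_k})` is an injective homomorphism from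
the additive group `𝔽₂ⁿ` into `O(n)` sending the `i`-th row of `A` mod 2 to `D_i`. Hence the
holonomy group is isomorphic to the subgroup of `𝔽₂ⁿ` generated by the rows of `A`, that is, to
the row space of `A` over `𝔽₂`, which has exponent 2 and `2 ^ rank A` elements.
-/


noncomputable section

open Matrix

/-- The Euclidean group `E(n)`: pairs `(M, b)` with `M ∈ O(n)`, `b ∈ ℝⁿ`,
acting on `ℝⁿ` by `x ↦ M x + b`. -/
@[ext]
structure EuclideanGroup (n : ℕ) where
  M : Matrix.orthogonalGroup (Fin n) ℝ
  b : Fin n → ℝ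

namespace EuclideanGroup

variable {n : ℕ}

instance : Mul (EuclideanGroup n) :=
  ⟨fun g h => ⟨g.M * h.M, (g.M : Matrix (Fin n) (Fin n) ℝ) *ᵥ h.b + g.b⟩⟩

instance : One (EuclideanGroup n) := ⟨⟨1, 0⟩⟩

instance : Inv (EuclideanGroup n) :=
  ⟨fun g => ⟨g.M⁻¹, -(star (g.M : Matrix (Fin n) (Fin n) ℝ) *ᵥ g.b)⟩⟩

@[simp] theorem mul_M (g h : EuclideanGroup n) : (g * h).M = g.M * h.M := rfl
@[simp] theorem mul_b (g h : EuclideanGroup n) :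
    (g * h).b = (g.M : Matrix (Fin n) (Fin n) ℝ) *ᵥ h.b + g.b := rfl
@[simp] theorem one_M : (1 : EuclideanGroup n).M = 1 := rfl
@[simp] theorem one_b : (1 : EuclideanGroup n).b = 0 := rfl
@[simp] theorem inv_M (g : EuclideanGroup n) : g⁻¹.M = g.M⁻¹ := rfl
@[simp] theorem inv_b (g : EuclideanGroup n) :
    g⁻¹.b = -(star (g.M : Matrix (Fin n) (Fin n) ℝ) *ᵥ g.b) := rfl

instance : Group (EuclideanGroup n) where
  mul_assoc a b c :=
    EuclideanGroup.ext (mul_assoc _ _ _)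
      (by simp [Matrix.mulVec_add, Matrix.mulVec_mulVec, add_assoc])
  one_mul a := by ext <;> simp
  mul_one a := by ext <;> simp
  inv_mul_cancel a :=
    EuclideanGroup.ext (inv_mul_cancel _) (by exact add_neg_cancel _)

end EuclideanGroup


/-- A Bott matrix: a strictly upper triangular binary matrix
(entries `0` or `1`, and `A i j = 0` whenever `j ≤ i`). -/
def IsBottMatrix {n : ℕ} (A : Matrix (Fin n) (Fin n) ℕ) : Prop :=
  (∀ i j : Fin n, A i j = 0 ∨ A i j = 1) ∧ ∀ i j : Fin n, (j : ℕ) ≤ (i : ℕ) → A i j = 0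

/-- The diagonal matrix `D_i` with `(k,k)`-entry `(-1) ^ (A i k)`. -/
def Dmat {n : ℕ} (A : Matrix (Fin n) (Fin n) ℕ) (i : Fin n) : Matrix (Fin n) (Fin n) ℝ :=
  Matrix.diagonal fun k => (-1 : ℝ) ^ (A i k)

theorem diagonal_pm_mem_orthogonalGroup {n : ℕ} (d : Fin n → ℝ)
    (hd : ∀ k, d k = 1 ∨ d k = -1) :
    Matrix.diagonal d ∈ Matrix.orthogonalGroup (Fin n) ℝ := by
  rw [Matrix.mem_orthogonalGroup_iff]
  have : (Matrix.diagonal d)ᵀ = Matrix.diagonal d := by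
    simp
  rw [this, Matrix.diagonal_mul_diagonal]
  have h1 : (fun k => d k * d k) = fun _ => (1 : ℝ) :=
    funext fun k => by rcases hd k with h | h <;> simp [h]
  rw [h1, Matrix.diagonal_one]

theorem Dmat_mem {n : ℕ} (A : Matrix (Fin n) (Fin n) ℕ) (i : Fin n) :
    Dmat A i ∈ Matrix.orthogonalGroup (Fin n) ℝ := by
  refine diagonal_pm_mem_orthogonalGroup _ fun k => ?_
  rcases Nat.even_or_odd (A i k) with h | h
  · exact Or.inl (h.neg_one_pow)
  · exact Or.inr (h.neg_one_pow)

/-- `D_i` as an element of the orthogonal group. -/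
def Dorth {n : ℕ} (A : Matrix (Fin n) (Fin n) ℕ) (i : Fin n) :
    Matrix.orthogonalGroup (Fin n) ℝ :=
  ⟨Dmat A i, Dmat_mem A i⟩

/-- The generators `s_i` of the Bieberbach group of the real Bott manifold `M(A)`:
for `i` with `i + 1 < n` (i.e. the mathematical indices `1 ≤ i ≤ n - 1`),
`s_i = (D_i, (1/2) e_i)`, and the last generator (mathematical index `n`) is
`s_n = (I, e_n)`.  (Indices are `0`-based.) -/
def sgen {n : ℕ} (A : Matrix (Fin n) (Fin n) ℕ) (i : Fin n) : EuclideanGroup n :=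
  if (i : ℕ) + 1 = n then ⟨1, Pi.single i 1⟩
  else ⟨Dorth A i, Pi.single i (1 / 2 : ℝ)⟩

/-- The fundamental group `Γ(A)` of the real Bott manifold `M(A)`, as the subgroup
of `E(n)` generated by `s_1, …, s_n`. -/
def BottGroup {n : ℕ} (A : Matrix (Fin n) (Fin n) ℕ) : Subgroup (EuclideanGroup n) :=
  Subgroup.closure (Set.range (sgen A))

theorem sgen_mem {n : ℕ} (A : Matrix (Fin n) (Fin n) ℕ) (i : Fin n) :
    sgen A i ∈ BottGroup A :=
  Subgroup.subset_closure (Set.mem_range_self i)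

/-- The homomorphism sending an affine isometry `(M, b)` to its linear part `M`. -/
def linearPart (n : ℕ) : EuclideanGroup n →* Matrix.orthogonalGroup (Fin n) ℝ where
  toFun g := g.M
  map_one' := rfl
  map_mul' _ _ := rfl

section SignDiagonal

variable {ι : Type*} [Fintype ι] [DecidableEq ι]

lemma neg_one_pow_val_add {R : Type*} [Ring R] (a b : ZMod 2) :
    (-1 : R) ^ (a + b).val = (-1) ^ a.val * (-1) ^ b.val := by
  rw [ZMod.val_add, ← neg_one_pow_eq_pow_mod_two, pow_add]

lemma neg_one_pow_val_eq_one {a : ZMod 2} (h : (-1 : ℝ) ^ a.val = 1) : a = 0 := by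
  have hval : a.val ≠ 1 := fun h1 => by norm_num [h1] at h
  exact (ZMod.val_eq_zero a).mp (by have := ZMod.val_lt a; omega)

def signDiagonal : Multiplicative (ι → ZMod 2) →* orthogonalGroup ι ℝ where
  toFun v := ⟨diagonal fun k => (-1) ^ (v.toAdd k).val, by
    rw [mem_orthogonalGroup_iff, diagonal_transpose, diagonal_mul_diagonal]
    simp [← mul_pow]⟩
  map_one' := Subtype.ext <| by simp
  map_mul' v w := Subtype.ext <| by
    simp [diagonal_mul_diagonal, neg_one_pow_val_add]

lemma signDiagonal_injective : Function.Injective (signDiagonal (ι := ι)) := by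
  refine (injective_iff_map_eq_one _).mpr fun v hv => ?_
  refine Multiplicative.toAdd.injective (funext fun k => neg_one_pow_val_eq_one ?_)
  simpa [signDiagonal] using congr_fun₂ (congrArg Subtype.val hv) k k

lemma signDiagonal_sq (v : Multiplicative (ι → ZMod 2)) : signDiagonal v ^ 2 = 1 := by
  have hv : v ^ 2 = 1 := by
    funext k
    exact (by decide : ∀ a : ZMod 2, 2 • a = 0) _
  rw [← map_pow, hv, map_one]

end SignDiagonal

lemma Submodule.toAddSubgroup_span_zmod {n : ℕ} {M : Type*} [AddCommGroup M] [Module (ZMod n) M]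
    (s : Set M) : (Submodule.span (ZMod n) s).toAddSubgroup = AddSubgroup.closure s :=
  le_antisymm
    (show Submodule.span (ZMod n) s ≤ AddSubgroup.toZModSubmodule n (AddSubgroup.closure s) from
      Submodule.span_le.mpr AddSubgroup.subset_closure)
    ((AddSubgroup.closure_le _).mpr Submodule.subset_span)

lemma Subgroup.closure_range_ofAdd {n : ℕ} {M ι : Type*} [AddCommGroup M] [Module (ZMod n) M]
    (v : ι → M) :
    Subgroup.closure (Set.range fun i => Multiplicative.ofAdd (v i)) =
      (Submodule.span (ZMod n) (Set.range v)).toAddSubgroup.toSubgroup := by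
  rw [Submodule.toAddSubgroup_span_zmod, AddSubgroup.toSubgroup_closure]
  congr 1

lemma Matrix.natCard_closure_range_ofAdd_row {p : ℕ} [Fact p.Prime] {m k : Type*}
    [Fintype m] [Fintype k] (B : Matrix m k (ZMod p)) :
    Nat.card (Subgroup.closure (Set.range fun i => Multiplicative.ofAdd (B i))) = p ^ B.rank := by
  calc Nat.card (Subgroup.closure (Set.range fun i => Multiplicative.ofAdd (B i)))
      = Nat.card (Submodule.span (ZMod p) (Set.range B.row)) :=
        congrArg (fun H : Subgroup _ => Nat.card H) (Subgroup.closure_range_ofAdd B.row)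
    _ = Nat.card (ZMod p) ^ B.rank := by
        rw [Matrix.rank_eq_finrank_span_row]
        exact Module.natCard_eq_pow_finrank
    _ = p ^ B.rank := by rw [Nat.card_zmod]

lemma Dorth_eq_signDiagonal {n : ℕ} (A : Matrix (Fin n) (Fin n) ℕ) (i : Fin n) :
    Dorth A i = signDiagonal (Multiplicative.ofAdd ((A.map fun a => (a : ZMod 2)) i)) :=
  Subtype.ext <| congrArg diagonal <| funext fun k => by
    simp [ZMod.val_natCast, ← neg_one_pow_eq_pow_mod_two]

lemma closure_range_Dorth_eq_map_signDiagonal {n : ℕ} (A : Matrix (Fin n) (Fin n) ℕ) :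
    Subgroup.closure (Set.range (Dorth A)) =
      (Subgroup.closure (Set.range fun i =>
        Multiplicative.ofAdd ((A.map fun a => (a : ZMod 2)) i))).map signDiagonal := by
  rw [MonoidHom.map_closure, ← Set.range_comp]
  exact congrArg _ (congrArg _ (funext (Dorth_eq_signDiagonal A)))

namespace IsBottMatrix

variable {n : ℕ} {A : Matrix (Fin n) (Fin n) ℕ}

lemma Dorth_eq_one (hA : IsBottMatrix A) {i : Fin n} (hi : (i : ℕ) + 1 = n) : Dorth A i = 1 :=
  Subtype.ext <| by
    show diagonal _ = diagonal fun _ => 1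
    exact congrArg diagonal <| funext fun k => by rw [hA.2 i k (by omega), pow_zero]

lemma linearPart_sgen (hA : IsBottMatrix A) (i : Fin n) : linearPart n (sgen A i) = Dorth A i := by
  unfold sgen
  split_ifs with hi
  · exact (hA.Dorth_eq_one hi).symm
  · rfl

lemma map_linearPart_bottGroup (hA : IsBottMatrix A) :
    (BottGroup A).map (linearPart n) = Subgroup.closure (Set.range (Dorth A)) := by
  rw [BottGroup, MonoidHom.map_closure, ← Set.range_comp]
  exact congrArg _ (congrArg _ (funext hA.linearPart_sgen))

lemma closure_range_Dorth (hA : IsBottMatrix A) :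
    Subgroup.closure (Set.range (Dorth A)) =
      Subgroup.closure {D | ∃ i : Fin n, (i : ℕ) + 1 < n ∧ D = Dorth A i} := by
  refine le_antisymm ((Subgroup.closure_le _).mpr ?_)
    (Subgroup.closure_mono fun _ ⟨i, _, hD⟩ => ⟨i, hD.symm⟩)
  rintro _ ⟨i, rfl⟩
  by_cases hi : (i : ℕ) + 1 < n
  · exact Subgroup.subset_closure ⟨i, hi, rfl⟩
  · rw [hA.Dorth_eq_one (by omega)]
    exact one_mem _

end IsBottMatrix

theorem holonomy_eq_closure_D_general (n : ℕ)
    (A : Matrix (Fin n) (Fin n) ℕ) (hA : IsBottMatrix A) :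
    Subgroup.map (linearPart n) (BottGroup A) =
      Subgroup.closure
        {D : Matrix.orthogonalGroup (Fin n) ℝ |
          ∃ i : Fin n, (i : ℕ) + 1 < n ∧ D = Dorth A i} ∧
    (∀ x ∈ Subgroup.map (linearPart n) (BottGroup A), x ≠ 1 → orderOf x = 2) ∧
    Nat.card (Subgroup.map (linearPart n) (BottGroup A)) =
      2 ^ (A.map fun a => (a : ZMod 2)).rank := by
  rw [hA.map_linearPart_bottGroup]
  refine ⟨hA.closure_range_Dorth, ?_, ?_⟩
  all_goals rw [closure_range_Dorth_eq_map_signDiagonal]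
  · rintro _ ⟨v, -, rfl⟩ hv
    exact orderOf_eq_prime (signDiagonal_sq v) hv
  · rw [Subgroup.card_map_of_injective signDiagonal_injective]
    exact Matrix.natCard_closure_range_ofAdd_row _

/-- The image of the linear-part homomorphism `λ : Γ(A) → O(n)` (the
holonomy group of `M(A)`) is the subgroup of diagonal orthogonal matrices generated by
`D_1, …, D_{n-1}`, every non-identity element of it has order `2`, and its cardinality is
`2^r` where `r = rank_{𝔽₂} A`. -/
theorem holonomy_eq_closure_D (n : ℕ) (hn : 2 ≤ n)
    (A : Matrix (Fin n) (Fin n) ℕ) (hA : IsBottMatrix A) :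
    Subgroup.map (linearPart n) (BottGroup A) =
      Subgroup.closure
        {D : Matrix.orthogonalGroup (Fin n) ℝ |
          ∃ i : Fin n, (i : ℕ) + 1 < n ∧ D = Dorth A i} ∧
    (∀ x ∈ Subgroup.map (linearPart n) (BottGroup A), x ≠ 1 → orderOf x = 2) ∧
    Nat.card (Subgroup.map (linearPart n) (BottGroup A)) =
      2 ^ (A.map fun a => (a : ZMod 2)).rank :=
  holonomy_eq_closure_D_general n A hA
end
end

section
/- The image of the linear-part homomorphism λ : Γ(A) → O(n) (the holonomy group of M(A)) has order 2^{n−1} if and only if all superdiagonal entries of A equal 1, i.e. a_{i,i+1} = 1 for every 1 ≤ i ≤ n−1. (Equivalently: the real Bott manifold M(A) is a generalized Hantzsche–Wendt manifold if and only if a_{1,2}a_{2,3}⋯a_{n−1,n} = 1.) -/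
noncomputable section

open Matrix

/-! The linear part of `s_i` is the sign matrix `diag((-1)^{a_{i,1}}, …, (-1)^{a_{i,n}})`, and
`v ↦ diag((-1)^{v_k})` embeds `(ℤ/2)ⁿ` into `O(n)`; so the holonomy group is the `ℤ/2`-span of
the rows of `A`, of order `2 ^ rank (A mod 2)`. Deleting the zero last row and the zero first
column of the strictly upper triangular `A` leaves an upper triangular `(n-1) × (n-1)` matrix
with diagonal `a_{1,2}, …, a_{n-1,n}`, which has rank `n - 1` iff its determinant
`a_{1,2} ⋯ a_{n-1,n}` is nonzero mod 2. -/

namespace Matrix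

variable {K : Type*} [Field K]

section Submatrix

variable {m m' n n' : Type*} [Fintype m] [Fintype m'] [Fintype n] [Fintype n']

theorem rank_submatrix_eq_of_row_eq_zero (M : Matrix m n K) (f : m' → m)
    (hf : ∀ i ∉ Set.range f, M i = 0) : (M.submatrix f id).rank = M.rank := by
  rw [rank_eq_finrank_span_row, rank_eq_finrank_span_row]
  suffices Submodule.span K (Set.range (M.row ∘ f)) = Submodule.span K (Set.range M.row) by
    rw [← this]; rfl
  refine le_antisymm (Submodule.span_mono (Set.range_comp_subset_range f M.row)) ?_
  rw [Submodule.span_le]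
  rintro _ ⟨i, rfl⟩
  by_cases hi : i ∈ Set.range f
  · obtain ⟨i', rfl⟩ := hi
    exact Submodule.subset_span ⟨i', rfl⟩
  · rw [row, hf i hi]
    exact Submodule.zero_mem _

theorem rank_submatrix_eq_of_row_col_eq_zero (M : Matrix m n K) (f : m' → m) (g : n' → n)
    (hf : ∀ i ∉ Set.range f, M i = 0) (hg : ∀ j ∉ Set.range g, Mᵀ j = 0) :
    (M.submatrix f g).rank = M.rank :=
  calc (M.submatrix f g).rank = ((M.submatrix id g).submatrix f id).rank := rfl
    _ = (Mᵀ.submatrix g id)ᵀ.rank :=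
      rank_submatrix_eq_of_row_eq_zero _ f fun i hi => by ext j; simp [hf i hi]
    _ = M.rank := by rw [rank_transpose, rank_submatrix_eq_of_row_eq_zero _ g hg, rank_transpose]

end Submatrix

theorem rank_eq_card_iff_det_ne_zero {m : Type*} [Fintype m] [DecidableEq m] (B : Matrix m m K) :
    B.rank = Fintype.card m ↔ B.det ≠ 0 := by
  rw [← isUnit_iff_ne_zero, ← isUnit_iff_isUnit_det, ← linearIndependent_rows_iff_isUnit,
    linearIndependent_iff_card_eq_finrank_span, Set.finrank, rank_eq_finrank_span_row, eq_comm]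

theorem rank_eq_iff_superdiag_ne_zero {m : ℕ} (M : Matrix (Fin (m + 1)) (Fin (m + 1)) K)
    (hM : ∀ i j, j ≤ i → M i j = 0) :
    M.rank = m ↔ ∀ i : Fin m, M i.castSucc i.succ ≠ 0 := by
  set B := M.submatrix Fin.castSucc Fin.succ
  have hB : B.IsUpperTriangular := fun i j hij => hM _ _ (Fin.succ_le_castSucc_iff.2 hij)
  have hrank : B.rank = M.rank := by
    refine rank_submatrix_eq_of_row_col_eq_zero M _ _ (fun i hi => ?_) (fun j hj => ?_)
    · obtain rfl : i = Fin.last m :=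
        Fin.ext (le_antisymm i.is_le (by simpa [Fin.range_castSucc] using hi))
      exact funext fun j => hM _ j (Fin.le_last j)
    · obtain rfl : j = 0 := by simpa [Fin.range_succ] using hj
      exact funext fun i => hM i 0 (Fin.zero_le i)
  have hdet := rank_eq_card_iff_det_ne_zero B
  rw [Fintype.card_fin] at hdet
  rw [← hrank, hdet, det_of_isUpperTriangular hB, Finset.prod_ne_zero_iff]
  simp [B]

end Matrix

theorem Submodule.toAddSubgroup_span_zmod_eq_closure {p : ℕ} {V : Type*} [AddCommGroup V]
    [Module (ZMod p) V] (s : Set V) :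
    (Submodule.span (ZMod p) s).toAddSubgroup = AddSubgroup.closure s :=
  le_antisymm
    (Submodule.span_le.2 AddSubgroup.subset_closure :
      Submodule.span (ZMod p) s ≤ AddSubgroup.toZModSubmodule p (AddSubgroup.closure s))
    ((AddSubgroup.closure_le _).2 Submodule.subset_span)

theorem neg_one_pow_zmod_two_val_injective :
    Function.Injective fun x : ZMod 2 => (-1 : ℝ) ^ x.val := by
  intro x y h
  fin_cases x <;> fin_cases y <;> first | rfl | norm_num [ZMod.val] at h

def signDiag (n : ℕ) : Multiplicative (Fin n → ZMod 2) →* Matrix.orthogonalGroup (Fin n) ℝ where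
  toFun v := ⟨Matrix.diagonal fun k => (-1) ^ (v.toAdd k).val,
    diagonal_pm_mem_orthogonalGroup _ fun _ => neg_one_pow_eq_or ℝ _⟩
  map_one' := Subtype.ext (by simp)
  map_mul' _ _ := Subtype.ext <| by
    simp only [toAdd_mul, Pi.add_apply, ZMod.val_add, ← neg_one_pow_eq_pow_mod_two, pow_add]
    simp

theorem signDiag_injective (n : ℕ) : Function.Injective (signDiag n) := fun _ _ h =>
  funext fun k => neg_one_pow_zmod_two_val_injective
    (congrFun (Matrix.diagonal_injective (congrArg Subtype.val h)) k)

theorem natCard_map_signDiag (n : ℕ) (S : Submodule (ZMod 2) (Fin n → ZMod 2)) :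
    Nat.card (S.toAddSubgroup.toSubgroup.map (signDiag n)) = 2 ^ Module.finrank (ZMod 2) S := by
  rw [Subgroup.card_map_of_injective (signDiag_injective n)]
  exact (Module.natCard_eq_pow_finrank (K := ZMod 2) (V := S)).trans (by rw [Nat.card_zmod])

section BottGroup

variable {n : ℕ} (A : Matrix (Fin n) (Fin n) ℕ)

theorem linearPart_sgen (hA : ∀ i j, j ≤ i → A i j = 0) (i : Fin n) :
    linearPart n (sgen A i) =
      signDiag n (.ofAdd ((A.map ((↑) : ℕ → ZMod 2)).row i)) := by
  unfold sgen
  split_ifs with hlast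
  · have hrow : (A.map ((↑) : ℕ → ZMod 2)).row i = 0 :=
      funext fun k => by simp [hA i k (by omega)]
    rw [hrow, ofAdd_zero, map_one]
    rfl
  · refine Subtype.ext (congrArg Matrix.diagonal (funext fun k => ?_))
    simp [ZMod.val_natCast, ← neg_one_pow_eq_pow_mod_two]

theorem map_linearPart_bottGroup (hA : ∀ i j, j ≤ i → A i j = 0) :
    (BottGroup A).map (linearPart n) =
      (Submodule.span (ZMod 2) (Set.range (A.map ((↑) : ℕ → ZMod 2)).row)
        ).toAddSubgroup.toSubgroup.map (signDiag n) := by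
  rw [BottGroup, MonoidHom.map_closure, Submodule.toAddSubgroup_span_zmod_eq_closure,
    AddSubgroup.toSubgroup_closure, MonoidHom.map_closure, ← Set.range_comp]
  congr 1
  ext g
  simp [linearPart_sgen A hA]

theorem natCard_map_linearPart_bottGroup (hA : ∀ i j, j ≤ i → A i j = 0) :
    Nat.card ((BottGroup A).map (linearPart n)) = 2 ^ (A.map ((↑) : ℕ → ZMod 2)).rank := by
  rw [map_linearPart_bottGroup A hA, natCard_map_signDiag, Matrix.rank_eq_finrank_span_row]

end BottGroup

/-- The holonomy group of `M(A)` (the image of the linear-part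
homomorphism on `Γ(A)`) has order `2^{n-1}` if and only if all superdiagonal entries of
`A` equal `1`; i.e. `M(A)` is a generalized Hantzsche–Wendt manifold iff
`a_{1,2} a_{2,3} ⋯ a_{n-1,n} = 1`. -/
theorem holonomy_card_eq_iff_superdiagonal (n : ℕ) (hn : 2 ≤ n)
    (A : Matrix (Fin n) (Fin n) ℕ) (hA : IsBottMatrix A) :
    Nat.card (Subgroup.map (linearPart n) (BottGroup A)) = 2 ^ (n - 1) ↔
      ∀ (i : Fin n) (h : (i : ℕ) + 1 < n), A i ⟨(i : ℕ) + 1, h⟩ = 1 := by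
  obtain ⟨hA01, hAtri⟩ := hA
  obtain ⟨m, rfl⟩ : ∃ m, n = m + 1 := ⟨n - 1, by omega⟩
  have hne_zero_iff (i j) : ((A i j : ZMod 2) ≠ 0 ↔ A i j = 1) := by
    rcases hA01 i j with h | h <;> simp [h]
  rw [natCard_map_linearPart_bottGroup A hAtri, (Nat.pow_right_injective le_rfl).eq_iff,
    Nat.add_sub_cancel, Matrix.rank_eq_iff_superdiag_ne_zero _ fun i j h => by simp [hAtri i j h]]
  simp only [Matrix.map_apply, hne_zero_iff]
  exact ⟨fun h i hi => h ⟨i, by omega⟩, fun h i => h i.castSucc (by simp)⟩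
end
end
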